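/- Let T be an ℝ-tree in which every point has at least 3 branches, and consider F = T × ℝ with the ℓ² product metric. For any two 2-flats (of the form α × ℝ with α a line in T) in F, there exists a third 2-flat intersecting each of them in a half-plane. -/

import Mathlib

open Set

/-- A geodesic space: any two points are joined by a geodesic segment. -/
def IsGeodesicSpace (X : Type*) [MetricSpace X] : Prop :=
  ∀ x y : X, ∃ g : ℝ → X, g 0 = x ∧ g (dist x y) = y ∧
    ∀ s ∈ Icc (0 : ℝ) (dist x y), ∀ t ∈ Icc (0 : ℝ) (dist x y),
      dist (g s) (g t) = |s - t|

/-- An `ℝ`-tree: a geodesic metric space which is `0`-hyperbolic. -/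
def IsRTree (X : Type*) [MetricSpace X] : Prop :=
  IsGeodesicSpace X ∧ ∀ x y z w : X,
    dist x y + dist z w ≤ max (dist x z + dist y w) (dist x w + dist y z)

/-- Every point of `T` is a branch point (at least 3 branches). -/
def EverywhereBranching (T : Type*) [MetricSpace T] : Prop :=
  ∀ p : T, ∃ x y z : T, dist p x = 1 ∧ dist p y = 1 ∧ dist p z = 1 ∧
    dist x y = 2 ∧ dist y z = 2 ∧ dist x z = 2

/-- A geodesic line: an isometric embedding of `ℝ`. -/
def GeodesicLine {X : Type*} [MetricSpace X] (α : ℝ → X) : Prop :=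
  ∀ s t : ℝ, dist (α s) (α t) = |s - t|

/-! In an `ℝ`-tree every point `q` has a gate `α c` on a line `α`:
`d(q, α s) = d(q, α c) + |s - c|`. If `β` leaves `α` at some point, or never meets it, the line
`γ` follows `α` up to the gate, crosses the bridge to `β` and then follows `β`; the gate identities
make it geodesic. If `β` runs inside `α`, branching at every integer distance from `α` yields points
whose segments from `α 0` fit together into a ray leaving `α`. In every case `γ` shares an unbounded
piece with each line without containing it, and as the contact set `{s | α s ∈ γ}` is a closed
interval in a tree, it must be a ray. -/

open Bornology Filter

theorem range_comp_neg {X : Type*} (α : ℝ → X) : range (α ∘ Neg.neg) = range α :=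
  neg_surjective.range_comp α

section GeodesicLine

variable {X : Type*} [MetricSpace X] {α : ℝ → X}

theorem GeodesicLine.isometry (hα : GeodesicLine α) : Isometry α :=
  Isometry.of_dist_eq fun s t => by rw [hα, Real.dist_eq]

theorem GeodesicLine.dist_eq_sub (hα : GeodesicLine α) {s t : ℝ} (h : s ≤ t) :
    dist (α s) (α t) = t - s := by
  rw [hα, abs_sub_comm, abs_of_nonneg (sub_nonneg.mpr h)]

theorem GeodesicLine.comp_neg (hα : GeodesicLine α) : GeodesicLine (α ∘ Neg.neg) := fun s t => by
  rw [Function.comp_apply, Function.comp_apply, hα, neg_sub_neg, abs_sub_comm]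

theorem GeodesicLine.not_isBounded_image (hα : GeodesicLine α) {s : Set ℝ}
    (hs : ¬ IsBounded s) : ¬ IsBounded (α '' s) := fun h =>
  hs ((hα.isometry.antilipschitz.isBounded_preimage h).subset (subset_preimage_image α s))

theorem Real.not_isBounded_Iic (a : ℝ) : ¬ IsBounded (Iic a) := fun h =>
  not_bddBelow_Iic a h.bddBelow

theorem Real.not_isBounded_Ici (a : ℝ) : ¬ IsBounded (Ici a) := fun h =>
  not_bddAbove_Ici a h.bddAbove

theorem geodesicLine_ite {f g : ℝ → X}
    (hf : ∀ u v, u ≤ 0 → v ≤ 0 → dist (f u) (f v) = |u - v|)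
    (hg : ∀ u v, 0 ≤ u → 0 ≤ v → dist (g u) (g v) = |u - v|)
    (hfg : ∀ u v, u ≤ 0 → 0 ≤ v → dist (f u) (g v) = v - u) :
    GeodesicLine fun u => if u ≤ 0 then f u else g u := by
  intro u v
  rcases le_or_gt u 0 with hu | hu <;> rcases le_or_gt v 0 with hv | hv
  · simp only [if_pos hu, if_pos hv, hf u v hu hv]
  · simp only [if_pos hu, if_neg (not_le.mpr hv), hfg u v hu hv.le]
    rw [abs_sub_comm, abs_of_nonneg (by linarith)]
  · simp only [if_neg (not_le.mpr hu), if_pos hv, dist_comm (g u), hfg v u hv hu.le]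
    rw [abs_of_nonneg (by linarith)]
  · simp only [if_neg (not_le.mpr hu), if_neg (not_le.mpr hv), hg u v hu.le hv.le]

/-- `α c` is the gate of `q` on `α`; in an `ℝ`-tree, its nearest-point projection. -/
def IsGate (α : ℝ → X) (q : X) (c : ℝ) : Prop :=
  ∀ s, dist q (α s) = dist q (α c) + |s - c|

theorem GeodesicLine.isGate_self (hα : GeodesicLine α) (c : ℝ) : IsGate α (α c) c := fun s => by
  rw [dist_self, zero_add, hα, abs_sub_comm]

theorem IsGate.comp_neg {q : X} {c : ℝ} (h : IsGate α q c) : IsGate (α ∘ Neg.neg) q (-c) :=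
  fun s => by
    rw [Function.comp_apply, Function.comp_apply, neg_neg, h (-s), sub_neg_eq_add,
      show -s - c = -(s + c) by ring, abs_neg]

end GeodesicLine

section RTree

variable {T : Type*} [MetricSpace T] {α β γ : ℝ → T}

theorem IsRTree.eq_of_dist_add_dist (hT : IsRTree T) {x y m m' : T} (hd : dist x m = dist x m')
    (hm : dist x m + dist m y = dist x y) (hm' : dist x m' + dist m' y = dist x y) : m = m' := by
  have h := hT.2 x y m m'
  rw [dist_comm y m', dist_comm y m] at h
  refine dist_le_zero.mp ?_
  rcases le_max_iff.mp h with h | h <;> linarith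

theorem IsRTree.dist_add_dist_add_dist (hT : IsRTree T) {a b c d : T} (hbc : b ≠ c)
    (habc : dist a b + dist b c = dist a c) (hbcd : dist b c + dist c d = dist b d) :
    dist a b + dist b c + dist c d = dist a d := by
  have h := hT.2 a c b d
  have hpos := dist_pos.mpr hbc
  rcases le_max_iff.mp h with h | h
  · linarith
  · rw [dist_comm c b] at h
    linarith [dist_triangle a c d]

theorem GeodesicLine.eq_apply_of_dist_add_dist (hγ : GeodesicLine γ) (hT : IsRTree T)
    {a b : ℝ} (hab : a ≤ b) {m : T} (hm : dist (γ a) m + dist m (γ b) = b - a) :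
    m = γ (a + dist (γ a) m) := by
  have h0 := dist_nonneg (x := γ a) (y := m)
  have h1 := dist_nonneg (x := m) (y := γ b)
  refine hT.eq_of_dist_add_dist (y := γ b) ?_ (by rw [hm, hγ.dist_eq_sub hab]) ?_
  · rw [hγ.dist_eq_sub (by linarith)]
    ring
  · rw [hγ.dist_eq_sub (by linarith), hγ.dist_eq_sub (by linarith), hγ.dist_eq_sub hab]
    ring

theorem GeodesicLine.mem_range_of_dist_add_dist (hγ : GeodesicLine γ) (hT : IsRTree T)
    {x y m : T} (hx : x ∈ range γ) (hy : y ∈ range γ) (hm : dist x m + dist m y = dist x y) :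
    m ∈ range γ := by
  obtain ⟨a, rfl⟩ := hx
  obtain ⟨b, rfl⟩ := hy
  rcases le_total a b with hab | hba
  · exact ⟨_, (hγ.eq_apply_of_dist_add_dist hT hab (by rw [hm, hγ.dist_eq_sub hab])).symm⟩
  · refine ⟨_, (hγ.eq_apply_of_dist_add_dist hT hba ?_).symm⟩
    rw [← hγ.dist_eq_sub hba]
    linarith [dist_comm (γ a) m, dist_comm m (γ b), dist_comm (γ a) (γ b)]

theorem GeodesicLine.ordConnected_preimage_range (hα : GeodesicLine α) (hγ : GeodesicLine γ)
    (hT : IsRTree T) : (α ⁻¹' range γ).OrdConnected :=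
  ⟨fun _ h₁ _ h₂ _ hs => hγ.mem_range_of_dist_add_dist hT h₁ h₂ (by
    rw [hα.dist_eq_sub hs.1, hα.dist_eq_sub hs.2, hα.dist_eq_sub (hs.1.trans hs.2)]
    ring)⟩

theorem IsRTree.add_sub_le_dist_of_forall_le (hT : IsRTree T) (hα : GeodesicLine α) {q : T}
    {c u : ℝ} (hmin : ∀ t, dist q (α c) ≤ dist q (α t)) (hcu : c ≤ u) :
    dist q (α c) + (u - c) ≤ dist q (α u) := by
  refine le_of_forall_pos_le_add fun ε hε => ?_
  rcases lt_or_ge ε (u - c) with hlt | hge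
  -- four-point condition on `q, α (c + ε), α c, α u`; minimality of `c` rules out one branch
  · have h := hT.2 q (α (c + ε)) (α c) (α u)
    rw [hα.dist_eq_sub hcu, hα.dist_eq_sub (by linarith : c + ε ≤ u), dist_comm (α (c + ε)),
      hα.dist_eq_sub (by linarith : c ≤ c + ε)] at h
    have := hmin (c + ε)
    rcases le_max_iff.mp h with h | h <;> linarith
  · linarith [hmin u]

theorem IsRTree.isGate_of_forall_le (hT : IsRTree T) (hα : GeodesicLine α) {q : T} {c : ℝ}
    (hmin : ∀ t, dist q (α c) ≤ dist q (α t)) : IsGate α q c := by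
  intro u
  refine le_antisymm ?_ ?_
  · calc dist q (α u) ≤ dist q (α c) + dist (α c) (α u) := dist_triangle _ _ _
      _ = dist q (α c) + |u - c| := by rw [hα, abs_sub_comm]
  · rcases le_total c u with h | h
    · rw [abs_of_nonneg (sub_nonneg.mpr h)]
      exact hT.add_sub_le_dist_of_forall_le hα hmin h
    · have := hT.add_sub_le_dist_of_forall_le hα.comp_neg (q := q) (c := -c) (u := -u)
        (fun t => by simpa using hmin (-t)) (neg_le_neg h)
      simp only [Function.comp_apply, neg_neg] at this
      rw [abs_of_nonpos (by linarith)]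
      linarith

theorem IsRTree.exists_isGate (hT : IsRTree T) (hα : GeodesicLine α) (q : T) :
    ∃ c, IsGate α q c := by
  have hcont : Continuous fun t => dist q (α t) := continuous_const.dist hα.isometry.continuous
  have hcoercive : Tendsto (fun t => dist q (α t)) (cocompact ℝ) atTop := by
    refine tendsto_atTop_mono (fun t => ?_) (tendsto_atTop_add_const_right _ (-dist q (α 0))
      (tendsto_dist_right_cocompact_atTop 0))
    have := dist_triangle (α t) q (α 0)
    rw [hα.isometry.dist_eq, dist_comm (α t)] at this
    linarith
  obtain ⟨c, hc⟩ := hcont.exists_forall_le hcoercive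
  exact ⟨c, hT.isGate_of_forall_le hα hc⟩

theorem IsGate.dist_add_dist_of_ne (hT : IsRTree T) (hα : GeodesicLine α) {q q' : T} {c c' : ℝ}
    (hq : IsGate α q c) (hq' : IsGate α q' c') (hne : c ≠ c') :
    dist q (α c) + dist (α c) q' = dist q q' := by
  have h := hT.dist_add_dist_add_dist (a := q) (d := q') (hα.isometry.injective.ne hne)
    (by rw [hq c', hα, abs_sub_comm])
    (by rw [dist_comm (α c) q', hq' c, hα, dist_comm (α c')]; ring)
  rw [← h, dist_comm (α c) q', hq' c, hα, dist_comm (α c') q']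
  ring

theorem IsRTree.isGate_of_disjoint (hT : IsRTree T) (hα : GeodesicLine α) (hβ : GeodesicLine β)
    (hdisj : Disjoint (range α) (range β)) {c t₀ : ℝ} (hc : IsGate α (β t₀) c) (t : ℝ) :
    IsGate α (β t) c := by
  obtain ⟨c', hc'⟩ := hT.exists_isGate hα (β t)
  obtain rfl | hne := eq_or_ne c' c
  · exact hc'
  · exact absurd (hβ.mem_range_of_dist_add_dist hT (mem_range_self t₀) (mem_range_self t)
      (hc.dist_add_dist_of_ne hT hα hc' hne.symm)) (disjoint_left.mp hdisj (mem_range_self c))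

theorem IsRTree.isGate_of_forall_gt_not_mem (hT : IsRTree T) (hα : GeodesicLine α)
    (hβ : GeodesicLine β) {s₂ t₂ t : ℝ} (hmeet : β t₂ = α s₂)
    (hexit : ∀ t > t₂, β t ∉ range α) (ht : t₂ ≤ t) : IsGate α (β t) s₂ := by
  obtain ⟨c, hc⟩ := hT.exists_isGate hα (β t)
  obtain rfl | hne := eq_or_ne c s₂
  · exact hc
  -- otherwise `α c` lies on `β` strictly after `t₂`
  have h₂ : IsGate α (β t₂) s₂ := by rw [hmeet]; exact hα.isGate_self s₂
  have hbtw := hc.dist_add_dist_of_ne hT hα h₂ hne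
  have hαc := hβ.eq_apply_of_dist_add_dist hT ht (m := α c)
    (by rw [← hβ.dist_eq_sub ht]; linarith [dist_comm (β t) (α c), dist_comm (α c) (β t₂),
      dist_comm (β t) (β t₂)])
  have hpos : 0 < dist (β t₂) (α c) := by
    rw [hmeet, dist_pos]
    exact hα.isometry.injective.ne hne.symm
  exact absurd ⟨c, hαc⟩ (hexit (t₂ + dist (β t₂) (α c)) (by linarith))

end RTree

theorem Set.OrdConnected.bddBelow_or_bddAbove {L : Type*} [LinearOrder L] {S : Set L}
    (hS : S.OrdConnected) (hne : S ≠ univ) : BddBelow S ∨ BddAbove S := by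
  by_contra! h
  refine hne (eq_univ_of_forall fun x => ?_)
  obtain ⟨a, ha, hax⟩ := not_bddBelow_iff.mp h.1 x
  obtain ⟨b, hb, hxb⟩ := not_bddAbove_iff.mp h.2 x
  exact hS.out ha hb ⟨hax.le, hxb.le⟩

theorem Real.exists_eq_Ici_or_eq_Iic {S : Set ℝ} (hc : IsClosed S) (ho : S.OrdConnected)
    (hb : ¬ IsBounded S) (hne : S ≠ univ) : ∃ b, S = Ici b ∨ S = Iic b := by
  have hS : S.Nonempty := nonempty_iff_ne_empty.mpr fun h => hb (h ▸ isBounded_empty)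
  rw [isBounded_iff_bddBelow_bddAbove, not_and_or] at hb
  rcases ho.bddBelow_or_bddAbove hne with hbb | hba
  · refine ⟨sInf S, Or.inl (Subset.antisymm (fun x hx => csInf_le hbb hx) ?_)⟩
    rw [← Ioi_insert]
    exact insert_subset (hc.csInf_mem hS hbb)
      (ho.isPreconnected.Ioi_csInf_subset hbb (hb.resolve_left (not_not.mpr hbb)))
  · refine ⟨sSup S, Or.inr (Subset.antisymm (fun x hx => le_csSup hba hx) ?_)⟩
    rw [← Iio_insert]
    exact insert_subset (hc.csSup_mem hS hba)
      (ho.isPreconnected.Iio_csSup_subset (hb.resolve_right (not_not.mpr hba)) hba)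

section Forks

variable {X : Type*} [MetricSpace X] {α β γ : ℝ → X}

/-- The flat `γ × ℝ` meets the flat `α × ℝ` in a half-plane `(ray of α) × ℝ`. -/
def MeetsInRay (γ α : ℝ → X) : Prop :=
  ∃ a, range γ ∩ range α = α '' Ici a ∨ range γ ∩ range α = α '' Iic a

def ForksFrom (γ α : ℝ → X) : Prop :=
  ¬ IsBounded (range γ ∩ range α) ∧ ¬ range α ⊆ range γ

theorem ForksFrom.mono (h : ForksFrom γ β) (hβα : range β ⊆ range α) : ForksFrom γ α :=
  ⟨fun hb => h.1 (hb.subset (inter_subset_inter_right _ hβα)), fun hα => h.2 (hβα.trans hα)⟩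

theorem forksFrom_comp_neg_iff : ForksFrom γ (α ∘ Neg.neg) ↔ ForksFrom γ α := by
  simp only [ForksFrom, range_comp_neg]

theorem GeodesicLine.isClosed_preimage_range (hα : GeodesicLine α) (hγ : GeodesicLine γ) :
    IsClosed (α ⁻¹' range γ) :=
  hγ.isometry.isClosedEmbedding.isClosed_range.preimage hα.isometry.continuous

theorem ForksFrom.meetsInRay (h : ForksFrom γ α) (hT : IsRTree X) (hα : GeodesicLine α)
    (hγ : GeodesicLine γ) : MeetsInRay γ α := by
  have himage : range γ ∩ range α = α '' (α ⁻¹' range γ) := by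
    rw [image_preimage_eq_range_inter, inter_comm]
  have hunb : ¬ IsBounded (α ⁻¹' range γ) := fun hb =>
    h.1 (himage ▸ hα.isometry.lipschitz.isBounded_image hb)
  obtain ⟨b, hb | hb⟩ := Real.exists_eq_Ici_or_eq_Iic (hα.isClosed_preimage_range hγ)
    (hα.ordConnected_preimage_range hγ hT) hunb (fun heq => h.2 (preimage_eq_univ_iff.mp heq))
  exacts [⟨b, Or.inl (by rw [himage, hb])⟩, ⟨b, Or.inr (by rw [himage, hb])⟩]

theorem forksFrom_of_isGate (hα : GeodesicLine α) {c : ℝ}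
    (hray : ∀ u ≤ 0, γ u = α (c + u)) (hgate : ∀ v, 0 ≤ v → IsGate α (γ v) c) :
    ForksFrom γ α := by
  have hsub : α '' Iic c ⊆ range γ ∩ range α := by
    rintro _ ⟨s, hs, rfl⟩
    exact ⟨⟨s - c, by rw [hray _ (by linarith [mem_Iic.mp hs]), add_sub_cancel]⟩, mem_range_self s⟩
  refine ⟨fun hb => hα.not_isBounded_image (Real.not_isBounded_Iic c) (hb.subset hsub),
    fun hsub' => ?_⟩
  obtain ⟨w, hw⟩ := hsub' (mem_range_self (c + 1))
  rcases le_or_gt w 0 with hw0 | hw0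
  · rw [hray w hw0] at hw
    linarith [hα.isometry.injective hw]
  · have h := hgate w hw0.le (c + 1)
    rw [hw, dist_self, add_sub_cancel_left, abs_one] at h
    linarith [dist_nonneg (x := α (c + 1)) (y := α c)]

end Forks

section Ray

variable {X : Type*} [MetricSpace X]

theorem dist_add_dist_eq_trans {x y z w : X} (h₁ : dist x y + dist y z = dist x z)
    (h₂ : dist x z + dist z w = dist x w) : dist x y + dist y w = dist x w := by
  linarith [dist_triangle y z w, dist_triangle x y w]

theorem dist_add_dist_eq_of_le {x : X} {p : ℕ → X}
    (hstep : ∀ n, dist x (p n) + dist (p n) (p (n + 1)) = dist x (p (n + 1))) {m n : ℕ}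
    (hmn : m ≤ n) : dist x (p m) + dist (p m) (p n) = dist x (p n) := by
  induction n, hmn using Nat.le_induction with
  | base => rw [dist_self, add_zero]
  | succ n _ ih => exact dist_add_dist_eq_trans ih (hstep n)

variable {T : Type*} [MetricSpace T]

/-- The segments from `x` to the points `p n` fit together into a geodesic ray. -/
theorem IsRTree.exists_ray (hT : IsRTree T) {x : T} {p : ℕ → T}
    (hfar : ∀ n : ℕ, (n : ℝ) ≤ dist x (p n))
    (hstep : ∀ n, dist x (p n) + dist (p n) (p (n + 1)) = dist x (p (n + 1))) :
    ∃ ρ : ℝ → T, ρ 0 = x ∧ (∀ u v, 0 ≤ u → 0 ≤ v → dist (ρ u) (ρ v) = |u - v|) ∧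
      ∀ n y, dist x y + dist y (p n) = dist x (p n) → ρ (dist x y) = y := by
  choose σ hσ0 hσ1 hσ using fun n => hT.1 x (p n)
  have hσx : ∀ n, ∀ v ∈ Icc 0 (dist x (p n)), dist x (σ n v) = v := fun n v hv => by
    rw [← hσ0 n, hσ n 0 (left_mem_Icc.mpr dist_nonneg) v hv, zero_sub, abs_neg,
      abs_of_nonneg hv.1]
  have hσbtw : ∀ n, ∀ v ∈ Icc 0 (dist x (p n)),
      dist x (σ n v) + dist (σ n v) (p n) = dist x (p n) := fun n v hv => by
    rw [hσx n v hv, ← hσ1 n, hσ n v hv _ (right_mem_Icc.mpr dist_nonneg),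
      abs_of_nonpos (by linarith [hv.2]), hσ1 n]
    ring
  have huniq : ∀ n y, dist x y + dist y (p n) = dist x (p n) → σ n (dist x y) = y := by
    intro n y hy
    have hv : dist x y ∈ Icc 0 (dist x (p n)) :=
      ⟨dist_nonneg, by linarith [dist_nonneg (x := y) (y := p n)]⟩
    exact hT.eq_of_dist_add_dist (hσx n _ hv) (hσbtw n _ hv) hy
  have hmono : ∀ m n, ∀ v ∈ Icc 0 (dist x (p m)), m ≤ n → σ n v = σ m v := by
    intro m n v hv hmn
    have h := huniq n (σ m v)
      (dist_add_dist_eq_trans (hσbtw m v hv) (dist_add_dist_eq_of_le hstep hmn))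
    rwa [hσx m v hv] at h
  have hmem : ∀ {v : ℝ} {n : ℕ}, 0 ≤ v → ⌈v⌉₊ ≤ n → v ∈ Icc 0 (dist x (p n)) := fun hv hn =>
    ⟨hv, (Nat.le_ceil _).trans ((Nat.cast_le.mpr hn).trans (hfar _))⟩
  let ρ : ℝ → T := fun v => σ ⌈v⌉₊ v
  have hρ : ∀ n, ∀ v ∈ Icc 0 (dist x (p n)), ρ v = σ n v := fun n v hv => by
    change σ ⌈v⌉₊ v = σ n v
    rw [← hmono _ (max ⌈v⌉₊ n) v (hmem hv.1 le_rfl) (le_max_left _ _),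
      hmono n _ v hv (le_max_right _ _)]
  refine ⟨ρ, ?_, fun u v hu hv => ?_, fun n y hy => ?_⟩
  · rw [hρ 0 0 (left_mem_Icc.mpr dist_nonneg), hσ0]
  · rw [hρ _ u (hmem hu (le_max_left ⌈u⌉₊ ⌈v⌉₊)), hρ _ v (hmem hv (le_max_right ⌈u⌉₊ ⌈v⌉₊)),
      hσ _ u (hmem hu (le_max_left _ _)) v (hmem hv (le_max_right _ _))]
  · rw [hρ n _ ⟨dist_nonneg, by linarith [dist_nonneg (x := y) (y := p n)]⟩, huniq n y hy]

variable {α : ℝ → T}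

theorem IsRTree.exists_geodesicLine_of_isGate (hT : IsRTree T) (hα : GeodesicLine α) {c : ℝ}
    {p : ℕ → T} (hgate : ∀ n, IsGate α (p n) c) (hfar : ∀ n : ℕ, (n : ℝ) ≤ dist (α c) (p n))
    (hstep : ∀ n, dist (α c) (p n) + dist (p n) (p (n + 1)) = dist (α c) (p (n + 1))) :
    ∃ γ : ℝ → T, GeodesicLine γ ∧ (∀ u ≤ 0, γ u = α (c + u)) ∧
      (∀ v, 0 ≤ v → IsGate α (γ v) c) ∧
      ∀ n y, dist (α c) y + dist y (p n) = dist (α c) (p n) → γ (dist (α c) y) = y := by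
  obtain ⟨ρ, hρ0, hρ, hρp⟩ := hT.exists_ray hfar hstep
  have hρc : ∀ v, 0 ≤ v → dist (ρ v) (α c) = v := fun v hv => by
    rw [← hρ0, hρ v 0 hv le_rfl, sub_zero, abs_of_nonneg hv]
  have hρgate : ∀ v, 0 ≤ v → IsGate α (ρ v) c := by
    intro v hv s
    obtain ⟨n, hn⟩ : ∃ n : ℕ, v ≤ dist (α c) (p n) := ⟨⌈v⌉₊, (Nat.le_ceil v).trans (hfar _)⟩
    have hpn : ρ (dist (α c) (p n)) = p n := hρp n (p n) (by rw [dist_self, add_zero])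
    have hvp := hρ v (dist (α c) (p n)) hv dist_nonneg
    rw [hpn, abs_of_nonpos (by linarith)] at hvp
    refine le_antisymm ?_ ?_
    · calc dist (ρ v) (α s) ≤ dist (ρ v) (α c) + dist (α c) (α s) := dist_triangle _ _ _
        _ = dist (ρ v) (α c) + |s - c| := by rw [hα, abs_sub_comm]
    · linarith [hgate n s, dist_triangle (p n) (ρ v) (α s), dist_comm (p n) (ρ v),
        dist_comm (p n) (α c), hρc v hv]
  let γ : ℝ → T := fun u => if u ≤ 0 then α (c + u) else ρ u
  have hγρ : ∀ v, 0 ≤ v → γ v = ρ v := by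
    intro v hv
    rcases hv.eq_or_lt with rfl | hv
    · simp only [γ, le_refl, if_true, add_zero, hρ0]
    · exact if_neg (not_le.mpr hv)
  refine ⟨γ, geodesicLine_ite (fun u v _ _ => by rw [hα]; ring_nf) hρ (fun u v hu hv => ?_),
    fun u hu => if_pos hu, fun v hv => hγρ v hv ▸ hρgate v hv, fun n y hy => ?_⟩
  · rw [dist_comm, hρgate v hv, hρc v hv, add_sub_cancel_left, abs_of_nonpos hu]
    ring
  · rw [hγρ _ dist_nonneg, hρp n y hy]

end Ray

section Branching

variable {T : Type*} [MetricSpace T] {α : ℝ → T}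

theorem IsRTree.dist_eq_two_or_dist_eq_two (hT : IsRTree T) {p x y g : T} (hx : dist p x = 1)
    (hy : dist p y = 1) (hxy : dist x y = 2) (hg : dist g p = 1) :
    dist g x = 2 ∨ dist g y = 2 := by
  have h := hT.2 x y g p
  rw [dist_comm x g, dist_comm y p, dist_comm x p, dist_comm y g] at h
  have hgx := dist_triangle g p x
  have hgy := dist_triangle g p y
  rcases le_max_iff.mp h with h | h
  · left; linarith
  · right; linarith

theorem IsRTree.exists_dist_eq_two (hT : IsRTree T) (hbr : EverywhereBranching T) {p g₁ g₂ : T}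
    (h₁ : dist g₁ p = 1) (h₂ : dist g₂ p = 1) :
    ∃ w, dist p w = 1 ∧ dist g₁ w = 2 ∧ dist g₂ w = 2 := by
  obtain ⟨x, y, z, hx, hy, hz, hxy, hyz, hxz⟩ := hbr p
  have := hT.dist_eq_two_or_dist_eq_two hx hy hxy h₁
  have := hT.dist_eq_two_or_dist_eq_two hy hz hyz h₁
  have := hT.dist_eq_two_or_dist_eq_two hx hz hxz h₁
  have := hT.dist_eq_two_or_dist_eq_two hx hy hxy h₂
  have := hT.dist_eq_two_or_dist_eq_two hy hz hyz h₂
  have := hT.dist_eq_two_or_dist_eq_two hx hz hxz h₂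
  by_contra! hw
  have := hw x hx
  have := hw y hy
  have := hw z hz
  tauto

theorem IsRTree.dist_eq_one_sub_of_nonpos (hT : IsRTree T) (hα : GeodesicLine α) {z : T}
    (h₀ : dist z (α 0) = 1) (h₁ : dist z (α (-1)) = 2) {s : ℝ} (hs : s ≤ 0) :
    dist z (α s) = 1 - s := by
  rcases le_total s (-1) with hs₁ | hs₁
  · have h := hT.dist_add_dist_add_dist (a := α s) (d := z)
      (hα.isometry.injective.ne (by norm_num : (-1 : ℝ) ≠ 0))
      (by rw [hα.dist_eq_sub hs₁, hα.dist_eq_sub (by norm_num), hα.dist_eq_sub hs]; ring)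
      (by rw [hα.dist_eq_sub (by norm_num), dist_comm (α 0), dist_comm (α (-1)), h₀, h₁]; norm_num)
    rw [dist_comm, ← h, hα.dist_eq_sub hs₁, hα.dist_eq_sub (by norm_num), dist_comm, h₀]
    ring
  · have hs₀ := hα.dist_eq_sub hs
    have hs₁' := hα.dist_eq_sub hs₁
    apply le_antisymm
    · linarith [dist_triangle z (α 0) (α s), dist_comm (α 0) (α s)]
    · linarith [dist_triangle z (α s) (α (-1)), dist_comm (α s) (α (-1))]

theorem IsRTree.dist_eq_one_add_abs (hT : IsRTree T) (hα : GeodesicLine α) {z : T}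
    (h₀ : dist z (α 0) = 1) (hl : dist z (α (-1)) = 2) (hr : dist z (α 1) = 2) (s : ℝ) :
    dist z (α s) = 1 + |s| := by
  rcases le_total s 0 with hs | hs
  · rw [abs_of_nonpos hs, hT.dist_eq_one_sub_of_nonpos hα h₀ hl hs]
    ring
  · have h := hT.dist_eq_one_sub_of_nonpos hα.comp_neg (z := z) (by simpa using h₀)
      (by simpa using hr) (neg_nonpos.mpr hs)
    rw [Function.comp_apply, neg_neg] at h
    rw [h, abs_of_nonneg hs]
    ring

theorem IsRTree.dist_eq_add_abs_of_dist_eq_two (hT : IsRTree T) (hα : GeodesicLine α)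
    {r : ℝ} {g y z : T} (hy : ∀ s, dist y (α s) = r + 1 + |s|) (hg : dist g (α 0) = r)
    (hgy : dist g y = 1) (hyz : dist y z = 1) (hgz : dist g z = 2) (s : ℝ) :
    dist z (α s) = r + 2 + |s| := by
  have hs₀ : dist (α s) (α 0) = |s| := by rw [hα, sub_zero]
  have hsg : dist (α s) g = r + |s| := by
    linarith [hy s, dist_triangle (α s) (α 0) g, dist_triangle (α s) g y, dist_comm (α 0) g,
      dist_comm (α s) y]
  have h := hT.dist_add_dist_add_dist (b := g) (c := y) (d := z)
    (dist_pos.mp (by rw [hgy]; exact one_pos))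
    (by rw [hsg, hgy, dist_comm, hy s]; ring) (by rw [hgy, hyz, hgz]; norm_num)
  rw [dist_comm, ← h, hsg, hgy, hyz]
  ring

theorem IsRTree.exists_dist_eq_succ_add_abs (hT : IsRTree T) (hbr : EverywhereBranching T)
    (hα : GeodesicLine α) (n : ℕ) (y : T) (hy : ∀ s, dist y (α s) = n + |s|) :
    ∃ z, (∀ s, dist z (α s) = (n + 1 : ℕ) + |s|) ∧ dist y z = 1 := by
  rcases n with _ | n
  · have hy₀ : y = α 0 := dist_le_zero.mp (by simp [hy 0])
    subst hy₀
    obtain ⟨z, hz₀, hzl, hzr⟩ := hT.exists_dist_eq_two hbr (p := α 0) (g₁ := α (-1))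
      (g₂ := α 1) (by rw [hα]; norm_num) (by rw [hα]; norm_num)
    refine ⟨z, fun s => ?_, hz₀⟩
    rw [hT.dist_eq_one_add_abs hα (by rwa [dist_comm]) (by rwa [dist_comm]) (by rwa [dist_comm])]
    norm_num
  · obtain ⟨g, hg₀, hg₁, hg⟩ := hT.1 y (α 0)
    rw [hy 0, abs_zero, add_zero] at hg₁ hg
    have hn : (0 : ℝ) ≤ n := n.cast_nonneg
    have hmem₀ : (0 : ℝ) ∈ Icc (0 : ℝ) ((n + 1 : ℕ) : ℝ) := ⟨le_rfl, by positivity⟩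
    have hmem₁ : (1 : ℝ) ∈ Icc (0 : ℝ) ((n + 1 : ℕ) : ℝ) := ⟨zero_le_one, by push_cast; linarith⟩
    have hmem : ((n + 1 : ℕ) : ℝ) ∈ Icc (0 : ℝ) ((n + 1 : ℕ) : ℝ) := ⟨by positivity, le_rfl⟩
    have hgy : dist (g 1) y = 1 := by rw [← hg₀, hg 1 hmem₁ 0 hmem₀]; norm_num
    have hgα : dist (g 1) (α 0) = n := by
      rw [← hg₁, hg 1 hmem₁ _ hmem, abs_of_nonpos (by push_cast; linarith)]
      push_cast
      ring
    obtain ⟨z, hyz, hgz, -⟩ := hT.exists_dist_eq_two hbr hgy hgy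
    refine ⟨z, fun s => ?_, hyz⟩
    rw [hT.dist_eq_add_abs_of_dist_eq_two hα (fun s => by rw [hy s]; push_cast; ring) hgα hgy
      hyz hgz s]
    push_cast
    ring

theorem IsRTree.exists_forksFrom (hT : IsRTree T) (hbr : EverywhereBranching T)
    (hα : GeodesicLine α) : ∃ γ, GeodesicLine γ ∧ ForksFrom γ α := by
  choose! next hnext using fun n y => hT.exists_dist_eq_succ_add_abs hbr hα n y
  let p : ℕ → T := fun n => Nat.rec (α 0) (fun k y => next k y) n
  have hp : ∀ n, ∀ s, dist (p n) (α s) = n + |s| := by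
    intro n
    induction n with
    | zero => intro s; rw [show p 0 = α 0 from rfl, hα, zero_sub, abs_neg, Nat.cast_zero, zero_add]
    | succ k ih => exact (hnext k (p k) ih).1
  have hp₀ : ∀ n, dist (α 0) (p n) = n := fun n => by rw [dist_comm, hp n 0, abs_zero, add_zero]
  obtain ⟨γ, hγ, hray, hgate, -⟩ := hT.exists_geodesicLine_of_isGate hα (c := 0) (p := p)
    (fun n s => by rw [hp n s, hp n 0, abs_zero, add_zero, sub_zero])
    (fun n => (hp₀ n).ge)
    (fun n => by rw [hp₀ n, hp₀ (n + 1), (hnext n (p n) (hp n)).2]; push_cast; ring)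
  exact ⟨γ, hγ, forksFrom_of_isGate hα hray hgate⟩

end Branching

section Cases

variable {T : Type*} [MetricSpace T] {α β : ℝ → T}

/-- The line running along `α` up to `α c₀`, across to `β c₁` and then along `β`. -/
theorem IsRTree.exists_forksFrom_of_isGate (hT : IsRTree T) (hα : GeodesicLine α)
    (hβ : GeodesicLine β) {c₀ c₁ : ℝ} (hαβ : ∀ t, c₁ ≤ t → IsGate α (β t) c₀)
    (hβα : IsGate β (α c₀) c₁) (hβ_not : β (c₁ - 1) ∉ α '' Iic c₀) :
    ∃ γ, GeodesicLine γ ∧ ForksFrom γ α ∧ ForksFrom γ β := by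
  set D := dist (α c₀) (β c₁)
  have hD : ∀ t, dist (α c₀) (β t) = D + |t - c₁| := hβα
  have hDn : ∀ n : ℕ, dist (α c₀) (β (c₁ + n)) = D + n := fun n => by
    rw [hD, add_sub_cancel_left, abs_of_nonneg n.cast_nonneg]
  obtain ⟨γ, hγ, hray, hgate, hbtw⟩ := hT.exists_geodesicLine_of_isGate hα (c := c₀)
    (p := fun n => β (c₁ + n)) (fun n => hαβ _ (le_add_of_nonneg_right n.cast_nonneg))
    (fun n => by rw [hDn]; linarith [dist_nonneg (x := α c₀) (y := β c₁)])
    (fun n => by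
      rw [hDn, hDn, hβ.dist_eq_sub (by push_cast; linarith)]
      push_cast
      ring)
  have hβγ : ∀ t, c₁ ≤ t → γ (D + (t - c₁)) = β t := by
    intro t ht
    have hn : t ≤ c₁ + ⌈t - c₁⌉₊ := by linarith [Nat.le_ceil (t - c₁)]
    have h := hbtw ⌈t - c₁⌉₊ (β t)
      (by rw [hD, hDn, hβ.dist_eq_sub hn, abs_of_nonneg (by linarith)]; ring)
    rwa [hD, abs_of_nonneg (sub_nonneg.mpr ht)] at h
  refine ⟨γ, hγ, forksFrom_of_isGate hα hray hgate, fun hb => ?_, fun hsub => ?_⟩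
  · refine hβ.not_isBounded_image (Real.not_isBounded_Ici c₁) (hb.subset ?_)
    rintro _ ⟨t, ht, rfl⟩
    exact ⟨⟨_, hβγ t ht⟩, mem_range_self t⟩
  · obtain ⟨w, hw⟩ := hsub (mem_range_self (c₁ - 1))
    rcases le_or_gt w 0 with hw0 | hw0
    · exact hβ_not ⟨c₀ + w, by simpa using hw0, by rw [← hray w hw0, hw]⟩
    -- `γ w = β (c₁ - 1)` forces `w = D + 1`, but there `γ` passes through `β (c₁ + 1)`
    · have hwD : w = D + 1 := by
        have h := hγ 0 w
        rw [hray 0 le_rfl, add_zero, hw, hD, zero_sub, abs_neg, abs_of_pos hw0] at h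
        rw [← h, sub_sub_cancel_left, abs_neg, abs_one]
      have h := hβγ (c₁ + 1) (by linarith)
      rw [add_sub_cancel_left, ← hwD, hw] at h
      linarith [hβ.isometry.injective h]

theorem IsRTree.exists_forksFrom_of_disjoint (hT : IsRTree T) (hα : GeodesicLine α)
    (hβ : GeodesicLine β) (hdisj : Disjoint (range α) (range β)) :
    ∃ γ, GeodesicLine γ ∧ ForksFrom γ α ∧ ForksFrom γ β := by
  obtain ⟨c₀, hc₀⟩ := hT.exists_isGate hα (β 0)
  obtain ⟨c₁, hc₁⟩ := hT.exists_isGate hβ (α c₀)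
  exact hT.exists_forksFrom_of_isGate hα hβ (fun t _ => hT.isGate_of_disjoint hα hβ hdisj hc₀ t)
    hc₁ fun ⟨s, _, hs⟩ => disjoint_left.mp hdisj (mem_range_self s) (hs ▸ mem_range_self _)

theorem IsRTree.exists_forksFrom_of_exit (hT : IsRTree T) (hα : GeodesicLine α)
    (hβ : GeodesicLine β) {s₂ t₂ : ℝ} (hmeet : β t₂ = α s₂) (hexit : ∀ t > t₂, β t ∉ range α) :
    ∃ γ, GeodesicLine γ ∧ ForksFrom γ α ∧ ForksFrom γ β := by
  wlog hdir : β (t₂ - 1) ∉ α '' Iic s₂ generalizing α s₂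
  -- otherwise `β (t₂ - 1)` avoids the other ray of `α` from `α s₂`: reverse `α`
  · obtain ⟨s, hs, hst⟩ := not_not.mp hdir
    have hdir' : β (t₂ - 1) ∉ (α ∘ Neg.neg) '' Iic (-s₂) := by
      rw [image_comp, image_neg_Iic, neg_neg]
      rintro ⟨s', hs', hs't⟩
      have hs₂ : s = s₂ := le_antisymm hs (hα.isometry.injective (hst.trans hs't.symm) ▸ hs')
      have h := hβ.isometry.injective (hst.symm.trans (by rw [hs₂, hmeet]))
      linarith
    obtain ⟨γ, hγ, hγα, hγβ⟩ := this hα.comp_neg (s₂ := -s₂) (by simpa using hmeet)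
      (by rwa [range_comp_neg]) hdir'
    exact ⟨γ, hγ, forksFrom_comp_neg_iff.mp hγα, hγβ⟩
  exact hT.exists_forksFrom_of_isGate hα hβ
    (fun t ht => hT.isGate_of_forall_gt_not_mem hα hβ hmeet hexit ht)
    (hmeet ▸ hβ.isGate_self t₂) hdir

theorem IsRTree.exists_forksFrom_of_not_disjoint (hT : IsRTree T) (hα : GeodesicLine α)
    (hβ : GeodesicLine β) (hsub : ¬ range β ⊆ range α) (hmeet : ¬ Disjoint (range α) (range β)) :
    ∃ γ, GeodesicLine γ ∧ ForksFrom γ α ∧ ForksFrom γ β := by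
  wlog hbdd : BddAbove (β ⁻¹' range α) generalizing β
  · obtain ⟨m, hm⟩ := ((hβ.ordConnected_preimage_range hα hT).bddBelow_or_bddAbove
      fun h => hsub (preimage_eq_univ_iff.mp h)).resolve_right hbdd
    obtain ⟨γ, hγ, hγα, hγβ⟩ := this hβ.comp_neg (by rwa [range_comp_neg])
      (by rwa [range_comp_neg]) ⟨-m, fun t ht => by linarith [hm ht]⟩
    exact ⟨γ, hγ, hγα, forksFrom_comp_neg_iff.mp hγβ⟩
  obtain ⟨_, ⟨s, rfl⟩, ⟨t, ht⟩⟩ := not_disjoint_iff.mp hmeet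
  obtain ⟨s₂, hs₂⟩ := (hβ.isClosed_preimage_range hα).csSup_mem ⟨t, s, ht.symm⟩ hbdd
  exact hT.exists_forksFrom_of_exit hα hβ hs₂.symm
    fun t ht hmem => not_le.mpr ht (le_csSup hbdd hmem)

end Cases

/-- In `F = T × ℝ` (ℓ² metric) over an everywhere-branching `ℝ`-tree `T`,
for any two 2-flats `α × ℝ` and `β × ℝ` there is a third 2-flat `γ × ℝ` meeting each of
them in a half-plane, i.e. `γ` meets each of `α`, `β` in a ray. -/
theorem third_flat_meeting_two_flats_in_halfPlanes
    {T : Type*} [MetricSpace T] (hT : IsRTree T) (hbr : EverywhereBranching T)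
    (α β : ℝ → T) (hα : GeodesicLine α) (hβ : GeodesicLine β) :
    ∃ γ : ℝ → T, GeodesicLine γ ∧
      (∃ a : ℝ, range γ ∩ range α = α '' Ici a ∨ range γ ∩ range α = α '' Iic a) ∧
      (∃ b : ℝ, range γ ∩ range β = β '' Ici b ∨ range γ ∩ range β = β '' Iic b) := by
  suffices ∃ γ, GeodesicLine γ ∧ ForksFrom γ α ∧ ForksFrom γ β by
    obtain ⟨γ, hγ, hγα, hγβ⟩ := this
    exact ⟨γ, hγ, hγα.meetsInRay hT hα hγ, hγβ.meetsInRay hT hβ hγ⟩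
  by_cases hsub : range β ⊆ range α
  · obtain ⟨γ, hγ, hγβ⟩ := hT.exists_forksFrom hbr hβ
    exact ⟨γ, hγ, hγβ.mono hsub, hγβ⟩
  by_cases hdisj : Disjoint (range α) (range β)
  · exact hT.exists_forksFrom_of_disjoint hα hβ hdisj
  · exact hT.exists_forksFrom_of_not_disjoint hα hβ hsub hdisj
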